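/- arXiv:2306.06280 — 4 statements merged into one kernel-verified Lean document; each statement's English description precedes it below -/
import Mathlib

section
/- Let L/K be a Galois extension of characteristic-zero fields with cyclic Galois group ⟨σ⟩ of order r, H a finite group, and ρ : H → GL(n, L) an absolutely irreducible representation. Suppose X ∈ GL(n, L) satisfies σ(ρ(τ⁻¹(h))) = X ρ(h) X⁻¹ for all h ∈ H, where τ is an automorphism of H of order r. Then the matrix N(X) := σ^{r-1}(X)···σ(X)·X is a scalar multiple λ·I of the identity matrix, with λ ∈ K^×. -/
open Matrix

section Aux

variable {K L : Type} [Field K] [Field L] [Algebra K L] {n : ℕ}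

lemma mapMul (f : L ≃ₐ[K] L) (M N : Matrix (Fin n) (Fin n) L) :
    (M * N).map ⇑f = M.map ⇑f * N.map ⇑f := by
  ext i j
  simp [Matrix.map_apply, Matrix.mul_apply, map_sum, _root_.map_mul]

lemma mapOne (f : L ≃ₐ[K] L) :
    (1 : Matrix (Fin n) (Fin n) L).map ⇑f = 1 := by
  ext i j
  simp [Matrix.map_apply, Matrix.one_apply, apply_ite]

lemma mapIdAlg (M : Matrix (Fin n) (Fin n) L) :
    M.map ⇑(1 : L ≃ₐ[K] L) = M := by
  ext i j
  rfl

end Aux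

/-- The "matrix norm" `σ^{r-1}(X) ⋯ σ(X) · X` of a square matrix `X` over `L`,
where `σ` generates the (cyclic) Galois group of `L/K`. -/
noncomputable def galMatNorm {K L : Type} [Field K] [Field L] [Algebra K L]
    (σ : L ≃ₐ[K] L) (r : ℕ) {n : ℕ} (X : Matrix (Fin n) (Fin n) L) :
    Matrix (Fin n) (Fin n) L :=
  (((List.range r).reverse).map (fun i => X.map ⇑(σ ^ i))).prod

/-- If `ρ : H → GL(n,L)` is absolutely irreducible (every matrix commuting
with its image is scalar, by Schur's lemma), `τ` is an automorphism of `H` with `τ^r = 1`,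
`L/K` is Galois of characteristic zero with cyclic Galois group generated by `σ` of order `r`,
and `X` conjugates `ρ` to `σ ∘ ρ ∘ τ⁻¹`, then `N(X) = σ^{r-1}(X)⋯σ(X)·X` is a scalar
matrix `λ·I` with `λ ∈ K^×`. -/
theorem matNorm_of_intertwiner_is_scalar
    {K L : Type} [Field K] [Field L] [Algebra K L] [IsGalois K L]
    [FiniteDimensional K L] [CharZero K]
    (r : ℕ) (σ : L ≃ₐ[K] L) (hσord : orderOf σ = r)
    (hσgen : ∀ g : L ≃ₐ[K] L, g ∈ Subgroup.zpowers σ)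
    {H : Type} [Group H] [Finite H]
    (τ : MulAut H) (hτ : τ ^ r = 1)
    {n : ℕ} (ρ : H →* (Matrix (Fin n) (Fin n) L)ˣ)
    (hSchur : ∀ A : Matrix (Fin n) (Fin n) L,
      (∀ h : H, A * (ρ h : Matrix (Fin n) (Fin n) L) = (ρ h : Matrix (Fin n) (Fin n) L) * A) →
      ∃ c : L, A = c • (1 : Matrix (Fin n) (Fin n) L))
    (X : (Matrix (Fin n) (Fin n) L)ˣ)
    (hX : ∀ h : H, ((ρ (τ⁻¹ h) : Matrix (Fin n) (Fin n) L)).map ⇑σ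
        = ((X * ρ h * X⁻¹ : (Matrix (Fin n) (Fin n) L)ˣ) : Matrix (Fin n) (Fin n) L)) :
    ∃ lam : K, lam ≠ 0 ∧
      galMatNorm σ r (X : Matrix (Fin n) (Fin n) L)
        = algebraMap K L lam • (1 : Matrix (Fin n) (Fin n) L) := by
  rcases Nat.eq_zero_or_pos n with hn | hn
  · subst hn
    exact ⟨1, one_ne_zero, Subsingleton.elim _ _⟩
  set A : Matrix (Fin n) (Fin n) L := (X : Matrix (Fin n) (Fin n) L) with hA
  set B : Matrix (Fin n) (Fin n) L := ((X⁻¹ : (Matrix (Fin n) (Fin n) L)ˣ) : Matrix (Fin n) (Fin n) L) with hB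
  have hAB : A * B = 1 := X.mul_inv
  have hBA : B * A = 1 := X.inv_mul
  -- the partial products
  set P : ℕ → Matrix (Fin n) (Fin n) L :=
    fun m => (((List.range m).reverse).map (fun i => A.map ⇑(σ ^ i))).prod with hPdef
  have hP0 : P 0 = 1 := by simp [hPdef]
  have hPsucc : ∀ m, P (m + 1) = A.map ⇑(σ ^ m) * P m := by
    intro m
    simp [hPdef, List.range_succ]
  have hcoe : ∀ m : ℕ, ⇑(σ ^ (m + 1)) = ⇑(σ ^ m) ∘ ⇑σ := by
    intro m
    rw [pow_succ]
    rfl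
  have hcoe' : ∀ m : ℕ, ⇑(σ ^ (m + 1)) = ⇑σ ∘ ⇑(σ ^ m) := by
    intro m
    rw [pow_succ']
    rfl
  -- multiplicative form of hX
  have hX' : ∀ h : H, A * (ρ h : Matrix (Fin n) (Fin n) L)
      = ((ρ (τ⁻¹ h) : Matrix (Fin n) (Fin n) L)).map ⇑σ * A := by
    intro h
    have h1 := hX h
    rw [Units.val_mul, Units.val_mul, ← hA, ← hB] at h1
    rw [h1, mul_assoc (A * (ρ h : Matrix (Fin n) (Fin n) L)) B A, hBA, mul_one]
  -- key intertwining property of partial products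
  have hP : ∀ m (h : H), P m * (ρ h : Matrix (Fin n) (Fin n) L)
      = ((ρ ((τ ^ m)⁻¹ h) : Matrix (Fin n) (Fin n) L)).map ⇑(σ ^ m) * P m := by
    intro m
    induction m with
    | zero =>
      intro h
      simp [hP0, mapIdAlg]
    | succ m ih =>
      intro h
      have hτpow : (τ ^ (m + 1))⁻¹ h = τ⁻¹ ((τ ^ m)⁻¹ h) := by
        rw [pow_succ, _root_.mul_inv_rev]
        rfl
      rw [hPsucc, mul_assoc, ih h, ← mul_assoc, ← mapMul, hX' ((τ ^ m)⁻¹ h), mapMul,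
        Matrix.map_map, ← hcoe, hτpow, mul_assoc, ← hPsucc]
  -- σ of the partial products
  have hQ : ∀ m, (P m).map ⇑σ * A = A.map ⇑(σ ^ m) * P m := by
    intro m
    induction m with
    | zero =>
      simp [hP0, mapOne, mapIdAlg]
    | succ m ih =>
      rw [hPsucc, mapMul, Matrix.map_map, ← hcoe', mul_assoc, ih, ← mul_assoc]
  have hσr : σ ^ r = 1 := by rw [← hσord]; exact pow_orderOf_eq_one σ
  -- N(X) commutes with the image of ρ
  have hcomm : ∀ h : H, P r * (ρ h : Matrix (Fin n) (Fin n) L)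
      = (ρ h : Matrix (Fin n) (Fin n) L) * P r := by
    intro h
    rw [hP r h, hτ, hσr, inv_one, MulAut.one_apply, mapIdAlg]
  obtain ⟨c, hc⟩ := hSchur (P r) hcomm
  -- N(X) is invertible, hence c ≠ 0
  haveI : Nonempty (Fin n) := ⟨⟨0, hn⟩⟩
  have hunit : IsUnit (P r) := by
    show IsUnit ((List.map (fun i => A.map ⇑(σ ^ i)) (List.range r).reverse)).prod
    refine List.prod_isUnit ?_
    intro m hm
    simp only [List.mem_map] at hm
    obtain ⟨i, _, rfl⟩ := hm
    exact ⟨⟨A.map ⇑(σ ^ i), B.map ⇑(σ ^ i), by rw [← mapMul, hAB, mapOne],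
      by rw [← mapMul, hBA, mapOne]⟩, rfl⟩
  have hc0 : c ≠ 0 := by
    rintro rfl
    rw [zero_smul] at hc
    rw [hc] at hunit
    exact not_isUnit_zero hunit
  -- σ fixes c
  have hmapsmul : ∀ (f : L ≃ₐ[K] L) (d : L),
      (d • (1 : Matrix (Fin n) (Fin n) L)).map ⇑f = f d • 1 := by
    intro f d
    ext i j
    by_cases hij : i = j <;>
      simp [Matrix.map_apply, Matrix.one_apply, Matrix.smul_apply, smul_eq_mul, hij]
  have hσc : σ c = c := by
    have h1 : (P r).map ⇑σ * A = A * P r := by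
      rw [hQ r, hσr, mapIdAlg]
    rw [hc, hmapsmul, smul_mul_assoc, mul_smul_comm, mul_one, one_mul] at h1
    have h2 : (σ c • A) * B = (c • A) * B := by rw [h1]
    rw [smul_mul_assoc, smul_mul_assoc, hAB] at h2
    have h3 := congrFun (congrFun h2 ⟨0, hn⟩) ⟨0, hn⟩
    simpa [Matrix.smul_apply, Matrix.one_apply, smul_eq_mul] using h3
  -- hence c is fixed by the whole Galois group
  have hfix : ∀ g : L ≃ₐ[K] L, g c = c := by
    intro g
    have hstab : σ ∈ MulAction.stabilizer (L ≃ₐ[K] L) c := hσc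
    have : Subgroup.zpowers σ ≤ MulAction.stabilizer (L ≃ₐ[K] L) c :=
      (Subgroup.zpowers_le).mpr hstab
    exact this (hσgen g)
  have hbot : c ∈ (⊥ : IntermediateField K L) := by
    have h1 : IntermediateField.fixedField (⊤ : Subgroup (L ≃ₐ[K] L)) = ⊥ := by
      conv_lhs => rw [← IntermediateField.fixingSubgroup_bot]
      exact IsGalois.fixedField_fixingSubgroup ⊥
    rw [← h1]
    intro g
    exact hfix g.1
  rw [IntermediateField.mem_bot] at hbot
  obtain ⟨lam, hlam⟩ := hbot
  refine ⟨lam, ?_, ?_⟩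
  · rintro rfl
    rw [map_zero] at hlam
    exact hc0 hlam.symm
  · rw [hlam]
    exact hc
end

section
/- Let L/K be a cyclic Galois extension of degree r with Galois group generated by σ. If a matrix X ∈ GL(n, L) satisfies σ^{r-1}(X)···σ(X)·X = I, then there exists Y ∈ GL(n, L) such that σ(Y)⁻¹·Y = X. -/
open Matrix

section Aux

variable {K L : Type} [Field K] [Field L] [Algebra K L]

lemma galMatNorm_zero (σ : L ≃ₐ[K] L) {n : ℕ} (X : Matrix (Fin n) (Fin n) L) :
    galMatNorm σ 0 X = 1 := by
  simp [galMatNorm]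

lemma galMatNorm_succ (σ : L ≃ₐ[K] L) (i : ℕ) {n : ℕ} (X : Matrix (Fin n) (Fin n) L) :
    galMatNorm σ (i + 1) X = (X.map ⇑(σ ^ i)) * galMatNorm σ i X := by
  simp [galMatNorm, List.range_succ]

/-- entrywise map by `σ` commutes with multiplication -/
lemma mapAlg_mul (σ : L ≃ₐ[K] L) {n : ℕ} (A B : Matrix (Fin n) (Fin n) L) :
    (A * B).map ⇑σ = A.map ⇑σ * B.map ⇑σ := by
  ext i j
  simp [Matrix.mul_apply, Matrix.map_apply, map_sum]

lemma pow_comp (σ : L ≃ₐ[K] L) (i : ℕ) : ⇑σ ∘ ⇑(σ ^ i) = ⇑(σ ^ (i + 1)) := by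
  funext x
  rw [pow_succ']
  rfl

lemma mapAlg_pow (σ : L ≃ₐ[K] L) (i : ℕ) {n : ℕ} (X : Matrix (Fin n) (Fin n) L) :
    (X.map ⇑(σ ^ i)).map ⇑σ = X.map ⇑(σ ^ (i + 1)) := by
  rw [Matrix.map_map, pow_comp]

lemma comp_vecMul (σ : L ≃ₐ[K] L) {n : ℕ} (u : Fin n → L) (A : Matrix (Fin n) (Fin n) L) :
    ⇑σ ∘ (u ᵥ* A) = (⇑σ ∘ u) ᵥ* (A.map ⇑σ) := by
  funext j
  simp only [Function.comp_apply, Matrix.vecMul, dotProduct, map_sum, _root_.map_mul,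
    Matrix.map_apply]

lemma comp_smul (σ : L ≃ₐ[K] L) {n : ℕ} (c : L) (u : Fin n → L) :
    ⇑σ ∘ (c • u) = σ c • (⇑σ ∘ u) := by
  funext x
  simp [_root_.map_mul]

lemma galMatNorm_map_mul (σ : L ≃ₐ[K] L) (i : ℕ) {n : ℕ} (X : Matrix (Fin n) (Fin n) L) :
    (galMatNorm σ i X).map ⇑σ * X = galMatNorm σ (i + 1) X := by
  induction i with
  | zero =>
      rw [galMatNorm_zero, galMatNorm_succ, galMatNorm_zero, mul_one]
      ext a b
      simp [Matrix.map_apply, Matrix.one_apply, apply_ite]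
  | succ i ih =>
      rw [galMatNorm_succ σ i X, mapAlg_mul, mul_assoc, ih, mapAlg_pow, ← galMatNorm_succ]

/-- Existence of "delta" coefficients from linear independence of characters. -/
lemma exists_delta [FiniteDimensional K L] (σ : L ≃ₐ[K] L) (r : ℕ) (hr : 0 < r)
    (hσord : orderOf σ = r) :
    ∃ (m : ℕ) (μ lam : Fin m → L),
      ∀ i : ℕ, i < r → (∑ j, μ j * (σ ^ i) (lam j)) = if i = 0 then 1 else 0 := by
  haveI : NeZero r := ⟨hr.ne'⟩
  set S : Set (Fin r → L) :=
    Set.range (fun l : L => fun i : Fin r => (σ ^ (i : ℕ)) l) with hS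
  have hspan : Submodule.span L S = ⊤ := by
    by_contra h
    obtain ⟨f, hf0, hfS⟩ :=
      Submodule.exists_dual_map_eq_bot_of_lt_top (lt_top_iff_ne_top.mpr h) inferInstance
    set c : Fin r → L := fun i => f (fun j => if i = j then 1 else 0) with hc
    have hfx : ∀ x : Fin r → L, f x = ∑ i, x i • c i := fun x =>
      LinearMap.pi_apply_eq_sum_univ f x
    have hfvan : ∀ l : L, ∑ i : Fin r, c i • (σ ^ (i : ℕ)) l = 0 := by
      intro l
      have hmem : (fun i : Fin r => (σ ^ (i : ℕ)) l) ∈ Submodule.span L S :=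
        Submodule.subset_span ⟨l, rfl⟩
      have : f (fun i : Fin r => (σ ^ (i : ℕ)) l) = 0 := by
        have := hfS ▸ Submodule.mem_map_of_mem (f := f) hmem
        simpa using this
      rw [hfx] at this
      simpa [smul_eq_mul, mul_comm] using this
    -- linear independence of characters
    have hinj : Function.Injective
        (fun i : Fin r => ((σ ^ (i : ℕ) : L ≃ₐ[K] L) : L →* L)) := by
      intro i j hij
      have : (σ ^ (i : ℕ) : L ≃ₐ[K] L) = σ ^ (j : ℕ) := by
        ext x
        exact DFunLike.congr_fun hij x
      have := pow_injOn_Iio_orderOf (x := σ)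
        (by simpa [hσord] using i.isLt) (by simpa [hσord] using j.isLt) this
      exact Fin.ext this
    have hLI := (linearIndependent_monoidHom L L).comp
        (fun i : Fin r => ((σ ^ (i : ℕ) : L ≃ₐ[K] L) : L →* L)) hinj
    have hzero : ∀ i : Fin r, c i = 0 := by
      refine Fintype.linearIndependent_iff.mp hLI c ?_
      funext l
      simp only [Finset.sum_apply, Pi.smul_apply, Function.comp_apply, Pi.zero_apply]
      simpa using hfvan l
    apply hf0
    ext x
    simp [hfx, hzero]
  have hmem : (Pi.single (0 : Fin r) (1 : L)) ∈ Submodule.span L S := by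
    rw [hspan]; trivial
  obtain ⟨m, μ, g, hg⟩ := Submodule.mem_span_set'.mp hmem
  choose lam hlam using fun j => (g j).2
  refine ⟨m, μ, lam, fun i hi => ?_⟩
  have := congrFun hg ⟨i, hi⟩
  simp only [Finset.sum_apply, Pi.smul_apply, smul_eq_mul] at this
  have hrw : ∀ j, ((g j : Fin r → L)) ⟨i, hi⟩ = (σ ^ i) (lam j) := by
    intro j
    conv_lhs => rw [← hlam j]
  rw [Finset.sum_congr rfl (fun j _ => by rw [hrw j])] at this
  rw [this, Pi.single_apply]
  simp [Fin.ext_iff, eq_comm]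

end Aux

/-- Hilbert 90 for `GL_n`, cyclic case. If `L/K` is cyclic Galois of degree
`r` with Galois group generated by `σ`, and `X ∈ GL(n,L)` satisfies
`σ^{r-1}(X)⋯σ(X)·X = I`, then there is `Y ∈ GL(n,L)` with `σ(Y)⁻¹·Y = X`. -/
theorem hilbert90_GLn_cyclic
    {K L : Type} [Field K] [Field L] [Algebra K L] [IsGalois K L]
    [FiniteDimensional K L]
    (r : ℕ) (σ : L ≃ₐ[K] L) (hσord : orderOf σ = r)
    (hσgen : ∀ g : L ≃ₐ[K] L, g ∈ Subgroup.zpowers σ)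
    {n : ℕ} (X : Matrix (Fin n) (Fin n) L) (hX : IsUnit X)
    (hN : galMatNorm σ r X = 1) :
    ∃ Y : Matrix (Fin n) (Fin n) L, IsUnit Y ∧ (Y.map ⇑σ)⁻¹ * Y = X := by
  classical
  have hr : 0 < r := hσord ▸ orderOf_pos σ
  have hσr : σ ^ r = 1 := hσord ▸ pow_orderOf_eq_one σ
  -- the fixed set
  set F : Set (Fin n → L) := {v | ((⇑σ ∘ v) ᵥ* X) = v} with hF
  -- every vector is in the L-span of F
  have hspanF : ∀ v : Fin n → L, v ∈ Submodule.span L F := by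
    intro v
    set w : ℕ → (Fin n → L) := fun i => (⇑(σ ^ i) ∘ v) ᵥ* (galMatNorm σ i X) with hw
    set t : L → ℕ → (Fin n → L) := fun l i => (σ ^ i) l • w i with ht
    have hw0 : w 0 = v := by
      funext x
      simp [hw, galMatNorm_zero, Matrix.vecMul_one]
    have hstep : ∀ (l : L) (i : ℕ), (⇑σ ∘ (t l i)) ᵥ* X = t l (i + 1) := by
      intro l i
      have hcomp : ⇑σ ∘ (t l i)
          = (σ ^ (i + 1)) l • ((⇑(σ ^ (i + 1)) ∘ v) ᵥ* ((galMatNorm σ i X).map ⇑σ)) := by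
        show ⇑σ ∘ ((σ ^ i) l • w i) = _
        rw [comp_smul]
        show σ ((σ ^ i) l) • (⇑σ ∘ ((⇑(σ ^ i) ∘ v) ᵥ* galMatNorm σ i X)) = _
        rw [comp_vecMul, ← Function.comp_assoc, pow_comp]
        congr 1
        rw [pow_succ']
        rfl
      rw [hcomp, Matrix.smul_vecMul, Matrix.vecMul_vecMul, galMatNorm_map_mul]
    have htr : ∀ l : L, t l r = t l 0 := by
      intro l
      show (σ ^ r) l • ((⇑(σ ^ r) ∘ v) ᵥ* galMatNorm σ r X)
          = (σ ^ 0) l • ((⇑(σ ^ 0) ∘ v) ᵥ* galMatNorm σ 0 X)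
      rw [hN, galMatNorm_zero, hσr, pow_zero]
    set p : L → (Fin n → L) := fun l => ∑ i ∈ Finset.range r, t l i with hp
    have hpF : ∀ l : L, p l ∈ F := by
      intro l
      show (⇑σ ∘ (p l)) ᵥ* X = p l
      have hsum : ⇑σ ∘ (p l) = ∑ i ∈ Finset.range r, ⇑σ ∘ (t l i) := by
        funext j
        simp [hp, map_sum, Finset.sum_apply]
      rw [hsum]
      have hvm : (∑ i ∈ Finset.range r, ⇑σ ∘ (t l i)) ᵥ* X
          = ∑ i ∈ Finset.range r, ((⇑σ ∘ (t l i)) ᵥ* X) := by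
        funext j
        simp only [Matrix.vecMul, dotProduct, Finset.sum_apply, Finset.sum_mul]
        exact Finset.sum_comm
      rw [hvm]
      have : ∑ i ∈ Finset.range r, ((⇑σ ∘ (t l i)) ᵥ* X) = ∑ i ∈ Finset.range r, t l (i + 1) :=
        Finset.sum_congr rfl (fun i _ => hstep l i)
      rw [this]
      have h1 : (∑ i ∈ Finset.range r, t l (i + 1)) + t l 0 = (∑ i ∈ Finset.range r, t l i) + t l r := by
        rw [← Finset.sum_range_succ' (t l) r, Finset.sum_range_succ]
      rw [htr l] at h1
      exact add_right_cancel h1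
    obtain ⟨m, μ, lam, hδ⟩ := exists_delta σ r hr hσord
    have hvrep : v = ∑ j, μ j • p (lam j) := by
      have : ∑ j, μ j • p (lam j)
          = ∑ i ∈ Finset.range r, ∑ j, (μ j * (σ ^ i) (lam j)) • w i := by
        rw [hp]
        simp only [Finset.smul_sum]
        rw [Finset.sum_comm]
        refine Finset.sum_congr rfl (fun i _ => Finset.sum_congr rfl (fun j _ => ?_))
        rw [ht]
        rw [smul_smul]
      rw [this]
      have : ∀ i ∈ Finset.range r, (∑ j, (μ j * (σ ^ i) (lam j)) • w i)
          = (if i = 0 then (1:L) else 0) • w i := by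
        intro i hi
        rw [← Finset.sum_smul, hδ i (Finset.mem_range.mp hi)]
      rw [Finset.sum_congr rfl this]
      simp only [ite_smul, one_smul, zero_smul]
      rw [Finset.sum_ite_eq' (Finset.range r) 0 w]
      simp [Finset.mem_range.mpr hr, hw0]
    rw [hvrep]
    exact Submodule.sum_mem _ fun j _ =>
      Submodule.smul_mem _ _ (Submodule.subset_span (hpF (lam j)))
  have hFtop : Submodule.span L F = ⊤ := Submodule.eq_top_iff'.mpr hspanF
  -- extract a basis inside F
  obtain ⟨b, hbF, hbspan, hbli⟩ := exists_linearIndependent L F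
  have hbtop : ⊤ ≤ Submodule.span L (Set.range ((↑) : b → (Fin n → L))) := by
    rw [Subtype.range_coe, hbspan, hFtop]
  let B : Module.Basis b L (Fin n → L) := Module.Basis.mk hbli hbtop
  haveI : Fintype b := FiniteDimensional.fintypeBasisIndex B
  have hcard : Fintype.card b = n := by
    rw [← Module.finrank_eq_card_basis B, Module.finrank_pi]
    simp
  let e : Fin n ≃ b := (Fintype.equivFinOfCardEq hcard).symm
  let B' : Module.Basis (Fin n) L (Fin n → L) := B.reindex e.symm
  set Y : Matrix (Fin n) (Fin n) L := Matrix.of (fun i => B' i) with hY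
  have hrowF : ∀ i, (Y i) ∈ F := by
    intro i
    have : B' i = ((e i : b) : Fin n → L) := by
      rw [show B' i = B (e.symm.symm i) from B.reindex_apply e.symm i]
      simp [B, Module.Basis.mk_apply]
    rw [hY]
    show (B' i) ∈ F
    rw [this]
    exact hbF (e i).2
  have hYfix : Y.map ⇑σ * X = Y := by
    ext i j
    have h := hrowF i
    have := congrFun h j
    rw [Matrix.mul_apply]
    simpa [Matrix.vecMul, dotProduct, Matrix.map_apply] using this
  have hYunit : IsUnit Y := by
    have hYT : Y = ((Pi.basisFun L (Fin n)).toMatrix B')ᵀ := by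
      ext i j
      simp [Module.Basis.toMatrix_apply, Pi.basisFun_repr, hY]
    haveI := (Pi.basisFun L (Fin n)).invertibleToMatrix B'
    have : IsUnit ((Pi.basisFun L (Fin n)).toMatrix B') := isUnit_of_invertible _
    rw [hYT, Matrix.isUnit_iff_isUnit_det, Matrix.det_transpose,
      ← Matrix.isUnit_iff_isUnit_det]
    exact this
  refine ⟨Y, hYunit, ?_⟩
  have hmapunit : IsUnit (Y.map ⇑σ) := by
    have : Y.map ⇑σ = (RingHom.mapMatrix (σ : L →+* L)) Y := by
      ext i j; simp [RingHom.mapMatrix_apply]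
    rw [this]
    exact hYunit.map _
  have hdet : IsUnit (Y.map ⇑σ).det := (Matrix.isUnit_iff_isUnit_det _).mp hmapunit
  calc (Y.map ⇑σ)⁻¹ * Y = (Y.map ⇑σ)⁻¹ * (Y.map ⇑σ * X) := by rw [hYfix]
    _ = X := by rw [← Matrix.mul_assoc, Matrix.nonsing_inv_mul _ hdet, one_mul]
end

section
/- Let L/K be a finite Galois extension of fields. Then the first Galois cohomology set H¹(Gal(L/K), GL(n, L)) is trivial, i.e., every 1-cocycle c : Gal(L/K) → GL(n,L) (satisfying c(στ) = c(σ)·σ(c(τ))) is of the form c(σ) = Y⁻¹·σ(Y) for some Y ∈ GL(n,L). -/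
open Matrix

/-- Hilbert's Theorem 90 for `GL_n`. For a finite Galois extension `L/K`,
`H¹(Gal(L/K), GL(n,L))` is trivial: every 1-cocycle `c : Gal(L/K) → GL(n,L)`, i.e. a map
satisfying `c(g₁g₂) = c(g₁)·g₁(c(g₂))`, is a coboundary `c(g) = Y⁻¹·g(Y)`. -/
theorem hilbert90_GLn
    {K L : Type} [Field K] [Field L] [Algebra K L] [IsGalois K L]
    [FiniteDimensional K L]
    {n : ℕ} (c : (L ≃ₐ[K] L) → (Matrix (Fin n) (Fin n) L)ˣ)
    (hc : ∀ g₁ g₂ : L ≃ₐ[K] L,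
      ((c (g₁ * g₂) : Matrix (Fin n) (Fin n) L))
        = (c g₁ : Matrix (Fin n) (Fin n) L) * ((c g₂ : Matrix (Fin n) (Fin n) L)).map ⇑g₁) :
    ∃ Y : (Matrix (Fin n) (Fin n) L)ˣ, ∀ g : L ≃ₐ[K] L,
      (c g : Matrix (Fin n) (Fin n) L)
        = ((Y⁻¹ : (Matrix (Fin n) (Fin n) L)ˣ) : Matrix (Fin n) (Fin n) L)
          * ((Y : Matrix (Fin n) (Fin n) L)).map ⇑g := by
  classical
  -- `c 1 = 1`
  have hc1 : (c 1 : Matrix (Fin n) (Fin n) L) = 1 := by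
    have h := hc 1 1
    rw [mul_one] at h
    have hmap : ((c 1 : Matrix (Fin n) (Fin n) L)).map ⇑(1 : (L ≃ₐ[K] L))
        = (c 1 : Matrix (Fin n) (Fin n) L) := by
      ext i j; simp [Matrix.map_apply]
    rw [hmap] at h
    have h2 : (1 : Matrix (Fin n) (Fin n) L) = (c 1 : Matrix (Fin n) (Fin n) L) := by
      calc (1 : Matrix (Fin n) (Fin n) L)
          = ((c 1)⁻¹ : (Matrix (Fin n) (Fin n) L)ˣ) * (c 1 : Matrix (Fin n) (Fin n) L) := by
            rw [Units.inv_mul]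
        _ = ((c 1)⁻¹ : (Matrix (Fin n) (Fin n) L)ˣ)
              * ((c 1 : Matrix (Fin n) (Fin n) L) * (c 1 : Matrix (Fin n) (Fin n) L)) := by
            rw [← h]
        _ = (((c 1)⁻¹ : (Matrix (Fin n) (Fin n) L)ˣ) * (c 1 : Matrix (Fin n) (Fin n) L))
              * (c 1 : Matrix (Fin n) (Fin n) L) := by rw [mul_assoc]
        _ = (c 1 : Matrix (Fin n) (Fin n) L) := by rw [Units.inv_mul, one_mul]
    exact h2.symm
  -- the set of vectors fixed by the twisted semilinear action
  set S : Set (Fin n → L) :=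
    {v | ∀ g : (L ≃ₐ[K] L), (c g : Matrix (Fin n) (Fin n) L).mulVec (fun i => g (v i)) = v} with hS
  -- averaging produces fixed vectors
  have havg : ∀ (a : L) (w : Fin n → L),
      (∑ g : (L ≃ₐ[K] L), (c g : Matrix (Fin n) (Fin n) L).mulVec (fun i => g (a * w i))) ∈ S := by
    intro a w τ
    have h1 : (fun i => τ ((∑ g : (L ≃ₐ[K] L),
          (c g : Matrix (Fin n) (Fin n) L).mulVec (fun i => g (a * w i))) i))
        = ∑ g : (L ≃ₐ[K] L), (fun i =>
            τ ((c g : Matrix (Fin n) (Fin n) L).mulVec (fun i => g (a * w i)) i)) := by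
      funext i; simp [Finset.sum_apply]
    rw [h1]
    have h2 : (c τ : Matrix (Fin n) (Fin n) L).mulVec (∑ g : (L ≃ₐ[K] L), (fun i =>
          τ ((c g : Matrix (Fin n) (Fin n) L).mulVec (fun i => g (a * w i)) i)))
        = ∑ g : (L ≃ₐ[K] L), (c τ : Matrix (Fin n) (Fin n) L).mulVec (fun i =>
            τ ((c g : Matrix (Fin n) (Fin n) L).mulVec (fun i => g (a * w i)) i)) := by
      exact
        map_sum ((c τ : Matrix (Fin n) (Fin n) L).mulVecLin)
          (fun g : (L ≃ₐ[K] L) => (fun i =>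
            τ ((c g : Matrix (Fin n) (Fin n) L).mulVec (fun i => g (a * w i)) i)))
          Finset.univ
    rw [h2]
    have h3 : ∀ g : (L ≃ₐ[K] L), (c τ : Matrix (Fin n) (Fin n) L).mulVec (fun i =>
          τ ((c g : Matrix (Fin n) (Fin n) L).mulVec (fun i => g (a * w i)) i))
        = (c (τ * g) : Matrix (Fin n) (Fin n) L).mulVec (fun i => (τ * g) (a * w i)) := by
      intro g
      have hsemi : (fun i => τ ((c g : Matrix (Fin n) (Fin n) L).mulVec
            (fun i => g (a * w i)) i))
          = ((c g : Matrix (Fin n) (Fin n) L).map ⇑τ).mulVec (fun i => τ (g (a * w i))) := by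
        funext i
        simp [Matrix.mulVec, dotProduct, map_sum, _root_.map_mul, Matrix.map_apply]
      rw [hsemi, Matrix.mulVec_mulVec, ← hc τ g]
      rfl
    calc (∑ g : (L ≃ₐ[K] L), (c τ : Matrix (Fin n) (Fin n) L).mulVec (fun i =>
            τ ((c g : Matrix (Fin n) (Fin n) L).mulVec (fun i => g (a * w i)) i)))
        = ∑ g : (L ≃ₐ[K] L), (c (τ * g) : Matrix (Fin n) (Fin n) L).mulVec
            (fun i => (τ * g) (a * w i)) := by
          exact Finset.sum_congr rfl fun g _ => h3 g
      _ = ∑ g : (L ≃ₐ[K] L), (c g : Matrix (Fin n) (Fin n) L).mulVec (fun i => g (a * w i)) :=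
          Fintype.sum_equiv (Equiv.mulLeft τ)
            (fun g => (c (τ * g) : Matrix (Fin n) (Fin n) L).mulVec
              (fun i => (τ * g) (a * w i)))
            (fun g => (c g : Matrix (Fin n) (Fin n) L).mulVec (fun i => g (a * w i)))
            (fun g => rfl)
  -- the fixed vectors span `L^n` over `L`
  have hspan : Submodule.span L S = ⊤ := by
    by_contra hne
    obtain ⟨f, hf0, hfbot⟩ :=
      Submodule.exists_dual_map_eq_bot_of_lt_top (lt_top_iff_ne_top.2 hne) inferInstance
    have hfS : ∀ v ∈ S, f v = 0 := by
      intro v hv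
      have hmem : f v ∈ (Submodule.span L S).map f :=
        Submodule.mem_map_of_mem (Submodule.subset_span hv)
      rw [hfbot] at hmem
      exact (Submodule.mem_bot L).mp hmem
    have key : ∀ w : Fin n → L, f w = 0 := by
      intro w
      set t : (L ≃ₐ[K] L) → L :=
        fun g => f ((c g : Matrix (Fin n) (Fin n) L).mulVec (fun i => g (w i))) with ht
      -- the relation ∑ g, t g • (g ∘ units) = 0
      have hrel : ∀ a : Lˣ, ∑ g : (L ≃ₐ[K] L), t g * g (a : L) = 0 := by
        intro a
        have h0 := hfS _ (havg (a : L) w)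
        rw [map_sum] at h0
        have heach : ∀ g : (L ≃ₐ[K] L),
            f ((c g : Matrix (Fin n) (Fin n) L).mulVec (fun i => g ((a : L) * w i)))
              = t g * g (a : L) := by
          intro g
          have hvec : (fun i => g ((a : L) * w i))
              = g (a : L) • (fun i => g (w i)) := by
            funext i; simp [_root_.map_mul, Pi.smul_apply, smul_eq_mul]
          rw [hvec, Matrix.mulVec_smul, LinearMap.map_smul, smul_eq_mul, ht, mul_comm]
        rw [Finset.sum_congr rfl fun g _ => heach g] at h0
        exact h0
      -- linear independence of characters
      have hφinj : Function.Injective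
          (fun g : (L ≃ₐ[K] L) => ((g : L →+* L).toMonoidHom.comp (Units.coeHom L))) := by
        intro g g' hgg
        ext x
        by_cases hx : x = 0
        · simp [hx]
        · have := congrFun (congrArg (fun m : Lˣ →* L => (m : Lˣ → L)) hgg) (Units.mk0 x hx)
          simpa using this
      have hli : LinearIndependent L
          (fun g : (L ≃ₐ[K] L) => ⇑((g : L →+* L).toMonoidHom.comp (Units.coeHom L))) :=
        (linearIndependent_monoidHom Lˣ L).comp _ hφinj
      have hz : ∀ g : (L ≃ₐ[K] L), t g = 0 := by
        have := Fintype.linearIndependent_iff.1 hli t ?_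
        · exact this
        · funext a
          have := hrel a
          simpa [Finset.sum_apply, Pi.smul_apply, smul_eq_mul] using this
      have h1 := hz 1
      rw [ht] at h1
      simp only [hc1, Matrix.one_mulVec] at h1
      simpa using h1
    exact hf0 (LinearMap.ext key)
  -- extract a basis of `L^n` consisting of fixed vectors
  obtain ⟨b, hbS, hbspan, hbli⟩ := exists_linearIndependent L S
  rw [hspan] at hbspan
  let B0 : Module.Basis b L (Fin n → L) :=
    Module.Basis.mk hbli (by rw [Subtype.range_coe]; exact hbspan.ge)
  let e : b ≃ Fin n := B0.indexEquiv (Pi.basisFun L (Fin n))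
  let B : Module.Basis (Fin n) L (Fin n → L) := B0.reindex e
  have hBmem : ∀ j : Fin n, (B j) ∈ S := by
    intro j
    have : B j = ((e.symm j : b) : Fin n → L) := by
      simp [B, B0, Module.Basis.reindex_apply, Module.Basis.mk_apply]
    rw [this]
    exact hbS (e.symm j).2
  -- the matrix whose columns are this basis
  set Ymat : Matrix (Fin n) (Fin n) L := (Pi.basisFun L (Fin n)).toMatrix ⇑B with hYmat
  haveI : Invertible Ymat := (Pi.basisFun L (Fin n)).invertibleToMatrix B
  have hYentry : ∀ i j, Ymat i j = B j i := by
    intro i j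
    rw [hYmat, Module.Basis.toMatrix_apply, Pi.basisFun_repr]
  set Yu : (Matrix (Fin n) (Fin n) L)ˣ := unitOfInvertible Ymat with hYu
  have hfix : ∀ g : (L ≃ₐ[K] L), (c g : Matrix (Fin n) (Fin n) L) * Ymat.map ⇑g = Ymat := by
    intro g
    ext i j
    have hcol := hBmem j g
    calc ((c g : Matrix (Fin n) (Fin n) L) * Ymat.map ⇑g) i j
        = ∑ k, (c g : Matrix (Fin n) (Fin n) L) i k * g (B j k) := by
          simp [Matrix.mul_apply, Matrix.map_apply, hYentry]
      _ = (c g : Matrix (Fin n) (Fin n) L).mulVec (fun k => g (B j k)) i := by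
          simp [Matrix.mulVec, dotProduct]
      _ = B j i := by rw [hcol]
      _ = Ymat i j := (hYentry i j).symm
  refine ⟨Yu⁻¹, fun g => ?_⟩
  rw [inv_inv]
  have hmap1 : (Ymat.map ⇑g) * (((Yu⁻¹ : (Matrix (Fin n) (Fin n) L)ˣ) :
      Matrix (Fin n) (Fin n) L).map ⇑g) = 1 := by
    have hmul : Ymat * ((Yu⁻¹ : (Matrix (Fin n) (Fin n) L)ˣ) :
        Matrix (Fin n) (Fin n) L) = 1 := by
      have := Yu.mul_inv
      simp only [hYu] at this ⊢; exact this
    calc (Ymat.map ⇑g) * (((Yu⁻¹ : (Matrix (Fin n) (Fin n) L)ˣ) :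
          Matrix (Fin n) (Fin n) L).map ⇑g)
        = (Ymat * ((Yu⁻¹ : (Matrix (Fin n) (Fin n) L)ˣ) :
            Matrix (Fin n) (Fin n) L)).map ⇑g := by
          ext i j
          simp [Matrix.mul_apply, Matrix.map_apply, map_sum, _root_.map_mul]
      _ = (1 : Matrix (Fin n) (Fin n) L).map ⇑g := by rw [hmul]
      _ = 1 := Matrix.map_one ⇑g (map_zero g) (map_one g)
  have hgoal : (c g : Matrix (Fin n) (Fin n) L)
      = Ymat * (((Yu⁻¹ : (Matrix (Fin n) (Fin n) L)ˣ) :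
          Matrix (Fin n) (Fin n) L).map ⇑g) := by
    calc (c g : Matrix (Fin n) (Fin n) L)
        = (c g : Matrix (Fin n) (Fin n) L) * 1 := (mul_one _).symm
      _ = (c g : Matrix (Fin n) (Fin n) L) * ((Ymat.map ⇑g) *
            (((Yu⁻¹ : (Matrix (Fin n) (Fin n) L)ˣ) :
              Matrix (Fin n) (Fin n) L).map ⇑g)) := by rw [hmap1]
      _ = ((c g : Matrix (Fin n) (Fin n) L) * Ymat.map ⇑g) *
            (((Yu⁻¹ : (Matrix (Fin n) (Fin n) L)ˣ) :
              Matrix (Fin n) (Fin n) L).map ⇑g) := by rw [mul_assoc]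
      _ = Ymat * (((Yu⁻¹ : (Matrix (Fin n) (Fin n) L)ˣ) :
            Matrix (Fin n) (Fin n) L).map ⇑g) := by rw [hfix g]
  simpa [hYu] using hgoal
end

section
/- Let L/K be a cyclic Galois extension of degree r with Galois group ⟨σ⟩ and c ∈ K^×. The cyclic algebra (L/K, σ, c) is isomorphic to the matrix algebra M_r(K) if and only if c is a norm from L, i.e., c ∈ N_{L/K}(L^×). -/
/-!
Put `τ = σ⁻¹`, so that `ξ * m ν = m (τ ν) * ξ`. On `L` itself the twisted shift `y ↦ μ * τ y`
obeys the same rule with respect to the multiplication operators, and its `r`-th power is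
multiplication by `∏_{i<r} τ^i μ = N(μ)`.

If `c = N(μ)`, then `m ν ↦ (ν * ·)`, `ξ ↦` (twisted shift by `μ`) extends to an algebra map
`A → End_K L`. It is injective by Dedekind's independence of the characters `τ^i`, hence bijective,
both sides having dimension `r²`.

Conversely, an isomorphism `A ≃ M_r(K)` makes `K^r` an `L`-vector space of `K`-dimension `r`, i.e.
a copy of `L`. Transported to `L`, `ξ` commutes with multiplications up to `τ`, so it is the twisted
shift by `a = ξ 1`, and `ξ ^ r = c` reads `c = N(a)`.
-/

open Finset Module

theorem prod_range_inv_pow_eq {G M : Type*} [Group G] [CommMonoid M] (f : G → M) {g : G}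
    {r : ℕ} (hg : g ^ r = 1) : ∏ i ∈ range r, f (g⁻¹ ^ i) = ∏ i ∈ range r, f (g ^ i) := by
  rcases r with _ | s
  · simp
  have hshift : ∏ i ∈ range (s + 1), f (g ^ (i + 1)) = ∏ i ∈ range (s + 1), f (g ^ i) := by
    rw [prod_range_succ, prod_range_succ', hg, pow_zero]
  rw [← hshift, ← prod_range_reflect]
  refine prod_congr rfl fun i hi => congrArg f ?_
  have hi := mem_range.mp hi
  rw [inv_pow, eq_comm, ← eq_inv_of_mul_eq_one_left]
  rw [← pow_add, show i + 1 + (s + 1 - 1 - i) = s + 1 by omega, hg]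

section Relations

variable {K L B : Type*} [CommSemiring K] [Semiring L] [Algebra K L] [Semiring B] [Algebra K B]
  {m : L →ₐ[K] B} {τ : L ≃ₐ[K] L} {x : B}

theorem pow_mul_map_of_mul_map (hx : ∀ ν, x * m ν = m (τ ν) * x) (n : ℕ) (ν : L) :
    x ^ n * m ν = m ((τ ^ n) ν) * x ^ n := by
  induction n generalizing ν with
  | zero => simp
  | succ n ih =>
    rw [pow_succ, mul_assoc, hx, ← mul_assoc, ih, mul_assoc, pow_succ, AlgEquiv.mul_apply]

theorem map_mul_pow_mul_map_mul_pow (hx : ∀ ν, x * m ν = m (τ ν) * x) (a b : L) (i j : ℕ) :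
    m a * x ^ i * (m b * x ^ j) = m (a * (τ ^ i) b) * x ^ (i + j) := by
  rw [mul_assoc, ← mul_assoc (x ^ i), pow_mul_map_of_mul_map hx, map_mul, pow_add]
  simp only [mul_assoc]

theorem pow_eq_algebraMap_mul_pow_mod {r : ℕ} {c : K} (hx : x ^ r = algebraMap K B c) (n : ℕ) :
    x ^ n = algebraMap K B (c ^ (n / r)) * x ^ (n % r) := by
  conv_lhs => rw [← Nat.div_add_mod n r, pow_add, pow_mul, hx, ← map_pow]

variable (m x) in
def cyclicCombination (r : ℕ) : (Fin r → L) →ₗ[K] B where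
  toFun f := ∑ i : Fin r, m (f i) * x ^ (i : ℕ)
  map_add' f g := by simp only [Pi.add_apply, map_add, add_mul, sum_add_distrib]
  map_smul' k f := by
    simp only [Pi.smul_apply, map_smul, smul_mul_assoc, smul_sum, RingHom.id_apply]

theorem cyclicCombination_apply {r : ℕ} (f : Fin r → L) :
    cyclicCombination m x r f = ∑ i : Fin r, m (f i) * x ^ (i : ℕ) := rfl

theorem cyclicCombination_single {r : ℕ} (j : Fin r) (a : L) :
    cyclicCombination m x r (Pi.single j a) = m a * x ^ (j : ℕ) := by
  rw [cyclicCombination_apply, Fintype.sum_eq_single j fun i hi => by simp [hi], Pi.single_eq_same]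

theorem cyclicCombination_mul (hx : ∀ ν, x * m ν = m (τ ν) * x) {r : ℕ} (f g : Fin r → L) :
    cyclicCombination m x r f * cyclicCombination m x r g =
      ∑ i : Fin r, ∑ j : Fin r, m (f i * (τ ^ (i : ℕ)) (g j)) * x ^ ((i : ℕ) + j) := by
  simp only [cyclicCombination_apply, sum_mul_sum, map_mul_pow_mul_map_mul_pow hx]

theorem exists_algHom_comp_cyclicCombination {A : Type*} [Semiring A] [Algebra K A]
    {m₀ : L →ₐ[K] A} {ξ : A} {r : ℕ} {c : K} (hr : 0 < r)
    (hbasis : Function.Bijective (cyclicCombination m₀ ξ r))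
    (hξ : ∀ ν, ξ * m₀ ν = m₀ (τ ν) * ξ) (hξr : ξ ^ r = algebraMap K A c)
    (hx : ∀ ν, x * m ν = m (τ ν) * x) (hxr : x ^ r = algebraMap K B c) :
    ∃ φ : A →ₐ[K] B, φ.toLinearMap ∘ₗ cyclicCombination m₀ ξ r = cyclicCombination m x r := by
  let G := LinearEquiv.ofBijective _ hbasis
  let φ := cyclicCombination m x r ∘ₗ G.symm.toLinearMap
  have hφG (f : Fin r → L) : φ (cyclicCombination m₀ ξ r f) = cyclicCombination m x r f := by
    change cyclicCombination m x r (G.symm (G f)) = _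
    rw [G.symm_apply_apply]
  -- reduce the exponent modulo `r`, using that `ξ ^ r` and `x ^ r` are the same scalar
  have hφ_monomial (a : L) (n : ℕ) : φ (m₀ a * ξ ^ n) = m a * x ^ n := by
    rw [pow_eq_algebraMap_mul_pow_mod hξr, pow_eq_algebraMap_mul_pow_mod hxr]
    simp only [← Algebra.smul_def, mul_smul_comm, map_smul]
    rw [← cyclicCombination_single ⟨n % r, Nat.mod_lt n hr⟩, hφG, cyclicCombination_single]
  have hφ_mul (y z : A) : φ (y * z) = φ y * φ z := by
    obtain ⟨f, rfl⟩ := hbasis.2 y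
    obtain ⟨g, rfl⟩ := hbasis.2 z
    simp only [cyclicCombination_mul hξ, hφG, cyclicCombination_mul hx, map_sum, hφ_monomial]
  have hφ_one : φ 1 = 1 := by simpa using hφ_monomial 1 0
  exact ⟨AlgHom.ofLinearMap φ hφ_one hφ_mul, LinearMap.ext hφG⟩

end Relations

section TwistedShift

variable {K L : Type*} [CommSemiring K] [CommSemiring L] [Algebra K L]

def twistedShift (τ : L ≃ₐ[K] L) (μ : L) : Module.End K L :=
  LinearMap.mulLeft K μ ∘ₗ τ.toLinearMap

theorem twistedShift_apply (τ : L ≃ₐ[K] L) (μ y : L) : twistedShift τ μ y = μ * τ y := rfl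

theorem twistedShift_mul_lmul (τ : L ≃ₐ[K] L) (μ ν : L) :
    twistedShift τ μ * Algebra.lmul K L ν = Algebra.lmul K L (τ ν) * twistedShift τ μ := by
  ext y
  simp only [Module.End.mul_apply, Algebra.coe_lmul_eq_mul, LinearMap.mul_apply',
    twistedShift_apply, map_mul, mul_left_comm]

theorem twistedShift_pow_apply (τ : L ≃ₐ[K] L) (μ : L) (n : ℕ) (y : L) :
    (twistedShift τ μ ^ n) y = (∏ i ∈ range n, (τ ^ i) μ) * (τ ^ n) y := by
  induction n with
  | zero => simp
  | succ n ih =>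
    rw [pow_succ', Module.End.mul_apply, ih, twistedShift_apply, map_mul, map_prod,
      prod_range_succ']
    simp only [pow_succ', AlgEquiv.mul_apply, pow_zero, AlgEquiv.one_apply]
    ring

theorem twistedShift_pow_eq_lmul {τ : L ≃ₐ[K] L} {r : ℕ} (hτ : τ ^ r = 1) (μ : L) :
    twistedShift τ μ ^ r = Algebra.lmul K L (∏ i ∈ range r, (τ ^ i) μ) := by
  ext y
  rw [twistedShift_pow_apply, hτ, AlgEquiv.one_apply, Algebra.coe_lmul_eq_mul,
    LinearMap.mul_apply']

theorem eq_twistedShift_of_mul_lmul {τ : L ≃ₐ[K] L} {T : Module.End K L}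
    (hT : ∀ ν, T * Algebra.lmul K L ν = Algebra.lmul K L (τ ν) * T) :
    T = twistedShift τ (T 1) := by
  ext y
  simpa [twistedShift_apply, mul_comm] using congr($(hT y) 1)

end TwistedShift

theorem cyclicCombination_twistedShift_injective {K L : Type*} [CommSemiring K] [CommRing L]
    [IsDomain L] [Algebra K L] {τ : L ≃ₐ[K] L} {r : ℕ} (hτ : r ≤ orderOf τ)
    {μ : L} (hμ : μ ≠ 0) :
    Function.Injective (cyclicCombination (Algebra.lmul K L) (twistedShift τ μ) r) := by
  refine (injective_iff_map_eq_zero _).2 fun f hf => ?_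
  have hpow_inj : Function.Injective fun i : Fin r => ((τ ^ (i : ℕ) : L ≃ₐ[K] L) : L →ₐ[K] L) :=
    fun i j hij => Fin.ext <| pow_injOn_Iio_orderOf (Set.mem_Iio.2 (i.2.trans_le hτ))
      (Set.mem_Iio.2 (j.2.trans_le hτ)) (AlgEquiv.coe_toAlgHom_injective hij)
  -- Dedekind's independence of the characters `τ ^ i`, `i < r`
  have hcoeff := Fintype.linearIndependent_iff.mp
    ((linearIndependent_algHom_toLinearMap K L L).comp _ hpow_inj)
    (fun i => f i * ∏ j ∈ range i, (τ ^ j) μ) <| by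
      ext y
      simpa [cyclicCombination_apply, twistedShift_pow_apply, mul_assoc] using congr($hf y)
  funext i
  exact (mul_eq_zero.mp (hcoeff i)).resolve_right
    (prod_ne_zero_iff.mpr fun j _ => (map_ne_zero_iff _ (τ ^ j).injective).2 hμ)

section Splitting

variable {K L A : Type*} [Field K] [Field L] [Algebra K L] [Ring A] [Algebra K A]

theorem exists_linearEquiv_mul_eq_apply [FiniteDimensional K L] {V : Type*} [AddCommGroup V]
    [Module K V] (hV : finrank K V = finrank K L) (ρ : L →ₐ[K] Module.End K V) :
    ∃ E : L ≃ₗ[K] V, ∀ l y, E (l * y) = ρ l (E y) := by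
  have hV_pos : 0 < finrank K V := hV ▸ finrank_pos
  have : FiniteDimensional K V := Module.finite_of_finrank_pos hV_pos
  have : Nontrivial V := Module.nontrivial_of_finrank_pos hV_pos
  obtain ⟨v, hv⟩ := exists_ne (0 : V)
  let e : L →ₗ[K] V := LinearMap.applyₗ v ∘ₗ ρ.toLinearMap
  have he : Function.Injective e := by
    rw [← LinearMap.ker_eq_bot, LinearMap.ker_eq_bot']
    intro l hl
    by_contra hl0
    apply hv
    calc v = ρ (l⁻¹ * l) v := by rw [inv_mul_cancel₀ hl0, map_one, Module.End.one_apply]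
      _ = 0 := by rw [map_mul, Module.End.mul_apply]; exact (congrArg _ hl).trans (map_zero _)
  refine ⟨LinearMap.linearEquivOfInjective e he hV.symm, fun l y => ?_⟩
  simp [e]

theorem exists_algHom_end_comp_eq_lmul [FiniteDimensional K L] {V : Type*} [AddCommGroup V]
    [Module K V] (hV : finrank K V = finrank K L) (ρ : A →ₐ[K] Module.End K V)
    (m : L →ₐ[K] A) : ∃ ψ : A →ₐ[K] Module.End K L, ψ.comp m = Algebra.lmul K L := by
  obtain ⟨E, hE⟩ := exists_linearEquiv_mul_eq_apply hV (ρ.comp m)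
  refine ⟨(E.symm.conjAlgEquiv K).toAlgHom.comp ρ, AlgHom.ext fun l => LinearMap.ext fun y => ?_⟩
  exact (congrArg E.symm (hE l y)).symm.trans (E.symm_apply_apply _)

theorem algebraMap_eq_prod_of_algHom_end {m : L →ₐ[K] A} {ξ : A} {τ : L ≃ₐ[K] L} {r : ℕ}
    {c : K} (hτ : τ ^ r = 1) (hξ : ∀ ν, ξ * m ν = m (τ ν) * ξ)
    (hξr : ξ ^ r = algebraMap K A c) (ψ : A →ₐ[K] Module.End K L)
    (hψ : ψ.comp m = Algebra.lmul K L) :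
    algebraMap K L c = ∏ i ∈ range r, (τ ^ i) (ψ ξ 1) := by
  have hT : ψ ξ = twistedShift τ (ψ ξ 1) := eq_twistedShift_of_mul_lmul fun ν => by
    simpa only [map_mul, ← AlgHom.comp_apply, hψ] using congrArg ψ (hξ ν)
  calc algebraMap K L c = ψ (ξ ^ r) 1 := by
        rw [hξr, AlgHom.commutes, Module.algebraMap_end_apply, Algebra.algebraMap_eq_smul_one]
    _ = (twistedShift τ (ψ ξ 1) ^ r) 1 := by rw [map_pow, ← hT]
    _ = ∏ i ∈ range r, (τ ^ i) (ψ ξ 1) := by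
        rw [twistedShift_pow_eq_lmul hτ, Algebra.coe_lmul_eq_mul, LinearMap.mul_apply', mul_one]

theorem nonempty_algEquiv_end_of_eq_prod [FiniteDimensional K L] {m : L →ₐ[K] A} {ξ : A}
    {τ : L ≃ₐ[K] L} {r : ℕ} {c : K} (hr : finrank K L = r) (hτ : orderOf τ = r)
    (hbasis : Function.Bijective (cyclicCombination m ξ r))
    (hξ : ∀ ν, ξ * m ν = m (τ ν) * ξ) (hξr : ξ ^ r = algebraMap K A c)
    {μ : L} (hμ : μ ≠ 0) (hc : algebraMap K L c = ∏ i ∈ range r, (τ ^ i) μ) :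
    Nonempty (A ≃ₐ[K] Module.End K L) := by
  obtain ⟨φ, hφ⟩ := exists_algHom_comp_cyclicCombination (hr ▸ finrank_pos) hbasis hξ hξr
    (twistedShift_mul_lmul τ μ) <| by
      rw [twistedShift_pow_eq_lmul (hτ ▸ pow_orderOf_eq_one τ), ← hc, AlgHom.commutes]
  have hinj : Function.Injective φ := by
    refine Function.Injective.of_comp_right (g := cyclicCombination m ξ r) ?_ hbasis.2
    have h := congrArg DFunLike.coe hφ
    rw [LinearMap.coe_comp] at h
    exact h ▸ cyclicCombination_twistedShift_injective hτ.ge hμ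
  let G := LinearEquiv.ofBijective _ hbasis
  have : FiniteDimensional K A := Module.Finite.equiv G
  have hdim : finrank K A = finrank K (Module.End K L) := by
    rw [← G.finrank_eq, Module.finrank_pi_fintype, Module.finrank_linearMap]
    simp [hr]
  have hsurj : Function.Surjective φ :=
    (LinearMap.injective_iff_surjective_of_finrank_eq_finrank (f := φ.toLinearMap) hdim).mp hinj
  exact ⟨AlgEquiv.ofBijective φ ⟨hinj, hsurj⟩⟩

end Splitting

theorem cyclicAlgebra_iso_matrix_iff_isNorm_general
    {K L : Type} [Field K] [Field L] [Algebra K L]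
    [FiniteDimensional K L]
    (r : ℕ) (σ : L ≃ₐ[K] L) (hσord : orderOf σ = r)
    (hr : Module.finrank K L = r)
    (c : K) (hc : c ≠ 0)
    {A : Type} [Ring A] [Algebra K A]
    (m : L →ₐ[K] A) (ξ : A)
    (hmξ : ∀ lam : L, m lam * ξ = ξ * m (σ lam))
    (hξr : ξ ^ r = m (algebraMap K L c))
    (hbasis : Function.Bijective
      (fun f : Fin r → L => ∑ i : Fin r, m (f i) * ξ ^ (i : ℕ))) :
    Nonempty (A ≃ₐ[K] Matrix (Fin r) (Fin r) K) ↔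
      ∃ μ : Lˣ, algebraMap K L c = ∏ i ∈ Finset.range r, (σ ^ i) (μ : L) := by
  have hσr : σ ^ r = 1 := hσord ▸ pow_orderOf_eq_one σ
  have hξ (ν : L) : ξ * m ν = m (σ⁻¹ ν) * ξ := by simpa using (hmξ (σ⁻¹ ν)).symm
  have hξr' : ξ ^ r = algebraMap K A c := by rw [hξr, m.commutes]
  constructor
  · rintro ⟨e⟩
    obtain ⟨ψ, hψ⟩ := exists_algHom_end_comp_eq_lmul (V := Fin r → K) (by simp [hr])
      (algEquivMatrix'.symm.toAlgHom.comp e.toAlgHom) m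
    have hnorm := algebraMap_eq_prod_of_algHom_end (by rw [inv_pow, hσr, inv_one]) hξ hξr' ψ hψ
    have ha : ψ ξ 1 ≠ 0 := fun ha => hc <| (algebraMap K L).injective <| by
      rw [hnorm, map_zero]
      exact prod_eq_zero (mem_range.2 (hr ▸ finrank_pos)) (by simp [ha])
    exact ⟨.mk0 _ ha, hnorm.trans (prod_range_inv_pow_eq (fun g : L ≃ₐ[K] L => g _) hσr)⟩
  · rintro ⟨μ, hμ⟩
    obtain ⟨e⟩ := nonempty_algEquiv_end_of_eq_prod hr (orderOf_inv σ ▸ hσord) hbasis hξ hξr'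
      μ.ne_zero (hμ.trans (prod_range_inv_pow_eq (fun g : L ≃ₐ[K] L => g _) hσr).symm)
    exact ⟨e.trans (algEquivMatrix (finBasisOfFinrankEq K L hr))⟩

/-- Let `L/K` be cyclic Galois of degree `r` with Galois group `⟨σ⟩` and
`c ∈ K^×`. The cyclic algebra `(L/K, σ, c)` — a `K`-algebra `A` containing `L` via
`m : L →ₐ[K] A`, with an element `ξ` satisfying `m(λ)ξ = ξm(σλ)` and `ξ^r = m(c)`, free as a
left `L`-space on `1, ξ, …, ξ^{r-1}` — is isomorphic to `M_r(K)` iff `c` is a norm from `L`,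
i.e. `c = N_{L/K}(μ) = σ^{r-1}(μ)⋯σ(μ)·μ` for some `μ ∈ L^×`. -/
theorem cyclicAlgebra_iso_matrix_iff_isNorm
    {K L : Type} [Field K] [Field L] [Algebra K L] [IsGalois K L]
    [FiniteDimensional K L]
    (r : ℕ) (σ : L ≃ₐ[K] L) (hσord : orderOf σ = r)
    (hσgen : ∀ g : L ≃ₐ[K] L, g ∈ Subgroup.zpowers σ)
    (hr : Module.finrank K L = r)
    (c : K) (hc : c ≠ 0)
    {A : Type} [Ring A] [Algebra K A]
    (m : L →ₐ[K] A) (ξ : A)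
    (hmξ : ∀ lam : L, m lam * ξ = ξ * m (σ lam))
    (hξr : ξ ^ r = m (algebraMap K L c))
    (hbasis : Function.Bijective
      (fun f : Fin r → L => ∑ i : Fin r, m (f i) * ξ ^ (i : ℕ))) :
    Nonempty (A ≃ₐ[K] Matrix (Fin r) (Fin r) K) ↔
      ∃ μ : Lˣ, algebraMap K L c = ∏ i ∈ Finset.range r, (σ ^ i) (μ : L) :=
  cyclicAlgebra_iso_matrix_iff_isNorm_general r σ hσord hr c hc m ξ hmξ hξr hbasis
end
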